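/- arXiv:1605.00495 — 2 statements merged into one kernel-verified Lean document; each statement's English description precedes it below -/
import Mathlib

section
/- In the restricted framework (S,R↓): every c-attack is an attack, i.e. if S₁ ⊆ S c-attacks s ∈ S then S₁ attacks s; and every c-attack is a c-defeat, i.e. if S₁ ⊆ S c-attacks s ∈ S then S₁ c-defeats s. -/
namespace CoalitionArg

/-- An argument: identifier paired with capacity. -/
abbrev Arg (A : Type*) := A × ℕ

variable {A : Type*}

/-- A coherent set of arguments: finite, positive capacities, and each
identifier occurs with at most one capacity. -/
def Coherent (S : Set (Arg A)) : Prop :=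
  S.Finite ∧ (∀ p ∈ S, 0 < p.2) ∧ ∀ p ∈ S, ∀ q ∈ S, p.1 = q.1 → p.2 = q.2

/-- Attack-strength functions are modelled as `Option ℕ`-valued functions;
`none` means undefined. -/
abbrev AttFun (A : Type*) := Set (Arg A) → Arg A → Option ℕ

/-- `R` is defined at `(T, s)`. -/
def RDef (R : AttFun A) (T : Set (Arg A)) (s : Arg A) : Prop := (R T s).isSome

/-- The eight axioms of an attack-strength function. -/
structure IsAttackStrength (R : AttFun A) : Prop where
  empty_undef : ∀ s, R ∅ s = none
  subset_def : ∀ S₁ S₂ s, RDef R S₁ s → S₂ ⊆ S₁ → S₂.Nonempty → RDef R S₂ s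
  union_def : ∀ S₁ S₂ s, RDef R S₁ s → RDef R S₂ s → RDef R (S₁ ∪ S₂) s
  pos : ∀ S₁ s n, R S₁ s = some n → 0 < n
  mono_source_cap : ∀ S₁ s a n m k, R S₁ s = some k → (a, n) ∈ S₁ → n ≤ m →
      ∃ k', R ((S₁ \ {(a, n)}) ∪ {(a, m)}) s = some k' ∧ k ≤ k'
  mono_source_inter : ∀ S₁ S₂ s k₁ k₂ k, R S₁ s = some k₁ → R S₂ s = some k₂ →
      R (S₁ ∩ S₂) s = some k → k ≤ k₁ ∧ k ≤ k₂
  mono_target : ∀ S₁ a n m k, R S₁ (a, n) = some k → (∀ p ∈ S₁, p.1 ≠ a) → n ≤ m →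
      ∃ k', R S₁ (a, m) = some k' ∧ k ≤ k'
  no_self : ∀ S₁ s, s ∈ S₁ → R S₁ s = none

/-- Attack-strength axioms without (2) quasi-closure by subsets and
(3) closure by union (for the restricted framework). -/
structure IsAttackStrengthRestr (R : AttFun A) : Prop where
  empty_undef : ∀ s, R ∅ s = none
  pos : ∀ S₁ s n, R S₁ s = some n → 0 < n
  mono_source_cap : ∀ S₁ s a n m k, R S₁ s = some k → (a, n) ∈ S₁ → n ≤ m →
      ∃ k', R ((S₁ \ {(a, n)}) ∪ {(a, m)}) s = some k' ∧ k ≤ k'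
  mono_source_inter : ∀ S₁ S₂ s k₁ k₂ k, R S₁ s = some k₁ → R S₂ s = some k₂ →
      R (S₁ ∩ S₂) s = some k → k ≤ k₁ ∧ k ≤ k₂
  mono_target : ∀ S₁ a n m k, R S₁ (a, n) = some k → (∀ p ∈ S₁, p.1 ≠ a) → n ≤ m →
      ∃ k', R S₁ (a, m) = some k' ∧ k ≤ k'
  no_self : ∀ S₁ s, s ∈ S₁ → R S₁ s = none

/-- An argumentation framework: a coherent set together with an
attack-strength function. -/
structure AF (A : Type*) where
  args : Set (Arg A)
  att : AttFun A
  coherent : Coherent args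
  isAtt : IsAttackStrength att

/-- `S₁` attacks `s`. -/
def Attacks (R : AttFun A) (S₁ : Set (Arg A)) (s : Arg A) : Prop :=
  ∃ S₂ ⊆ S₁, RDef R S₂ s

/-- `S₁` defeats `s`: it attacks `s`, and the maximum attack strength over
subsets of `S₁` reaches the capacity of `s`. -/
def Defeats (R : AttFun A) (S₁ : Set (Arg A)) (s : Arg A) : Prop :=
  Attacks R S₁ s ∧ ∃ S₂ ⊆ S₁, ∃ n, R S₂ s = some n ∧
    (∀ Sx ⊆ S₁, ∀ m, R Sx s = some m → m ≤ n) ∧ s.2 ≤ n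

/-- Maximum attack strength of `S₁` on `s` (0 when `S₁` does not attack `s`). -/
noncomputable def Vmax (R : AttFun A) (S₁ : Set (Arg A)) (s : Arg A) : ℕ :=
  sSup {n | ∃ S₂ ⊆ S₁, R S₂ s = some n}

/-- Conflict-eliminability: no member is defeated by the set itself.
(`α` is defined exactly on conflict-eliminable sets.) -/
def ConfElim (R : AttFun A) (S₁ : Set (Arg A)) : Prop := ∀ s ∈ S₁, ¬ Defeats R S₁ s

/-- The intrinsic arguments of `S₁`. -/
noncomputable def alpha (R : AttFun A) (S₁ : Set (Arg A)) : Set (Arg A) :=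
  (fun s => (s.1, s.2 - Vmax R S₁ s)) '' S₁

/-- The attacks occurring inside `S₁`. -/
def Del (R : AttFun A) (S₁ : Set (Arg A)) : Set (Set (Arg A) × Arg A) :=
  {p | p.2 ∈ S₁ ∧ p.1 ⊆ S₁ ∧ RDef R p.1 p.2}

open Classical in
/-- The attack-strength function of the view of `S₁`: `R` restricted off
`Del R S₁`. -/
noncomputable def viewAtt (R : AttFun A) (S₁ : Set (Arg A)) : AttFun A :=
  fun T s => if (T, s) ∈ Del R S₁ then none else R T s

/-- The argument set of the view of `S₁` about `S`. -/
noncomputable def viewArgs (R : AttFun A) (S S₁ : Set (Arg A)) : Set (Arg A) :=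
  (S \ S₁) ∪ alpha R S₁

/-- `S₁` c-attacks `s`. -/
def CAttacks (R : AttFun A) (S₁ : Set (Arg A)) (s : Arg A) : Prop :=
  ConfElim R S₁ ∧ ∃ S₂ ⊆ alpha R S₁, RDef (viewAtt R S₁) S₂ s

/-- `S₁` c-defeats `s`. -/
def CDefeats (R : AttFun A) (S₁ : Set (Arg A)) (s : Arg A) : Prop :=
  CAttacks R S₁ s ∧ ∃ S₃ ⊆ alpha R S₁, ∃ n, viewAtt R S₁ S₃ s = some n ∧ s.2 ≤ n

/-- c-admissibility of `S₁ ⊆ S`. -/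
def CAdmissible (R : AttFun A) (S S₁ : Set (Arg A)) : Prop :=
  ConfElim R S₁ ∧
  ∀ S₂ ⊆ viewArgs R S S₁, ∀ s ∈ S₁, Attacks R S₂ s →
    ∀ Sx ⊆ S₂, RDef R Sx s → ∃ sx ∈ Sx, CDefeats R S₁ sx

/-- c-preferredness of `S₁ ⊆ S`. -/
def CPreferred (R : AttFun A) (S S₁ : Set (Arg A)) : Prop :=
  CAdmissible R S S₁ ∧ ¬ ∃ Sy, S₁ ⊂ Sy ∧ Sy ⊆ S ∧ CAdmissible R S Sy

/-- `S₁` is one-directionally attacked. -/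
def OneDirAttacked (R : AttFun A) (S S₁ : Set (Arg A)) : Prop :=
  ConfElim R S₁ ∧ ∃ Sx ⊆ viewArgs R S S₁, (∃ s ∈ S₁, Attacks R Sx s) ∧
    ∀ sx ∈ Sx, ¬ CAttacks R S₁ sx

/-- The states relation `S₁ ≼ S₂`. -/
def StateLeq (R : AttFun A) (S S₁ S₂ : Set (Arg A)) : Prop :=
  ConfElim R S₁ ∧ ConfElim R S₂ ∧
  (CAdmissible R S S₂ ∨ OneDirAttacked R S S₁ ∨
    (¬ CAdmissible R S S₁ ∧ ¬ CAdmissible R S S₂ ∧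
     ¬ OneDirAttacked R S S₁ ∧ ¬ OneDirAttacked R S S₂))

/-- Coalition permission. -/
def CoalitionPermitted (R : AttFun A) (S₁ S₂ : Set (Arg A)) : Prop :=
  S₁ ∩ S₂ = ∅ ∧ ConfElim R (S₁ ∪ S₂)

/-- The attackers of `S₁` within `S`. -/
def Attacker (R : AttFun A) (S S₁ : Set (Arg A)) : Set (Arg A) :=
  {s ∈ S | ∃ s₁ ∈ S₁, Attacks R {s} s₁}

/-- Attackers of `S₁` that `Sx` neither c-defeats nor contains. -/
def UndefAtt (R : AttFun A) (S S₁ Sx : Set (Arg A)) : Set (Arg A) :=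
  {s ∈ Attacker R S S₁ | ¬ CDefeats R Sx s ∧ s ∉ Sx}

/-- The (fewer attackers) axiom for the pair `(S₁, S₂)`. -/
noncomputable def FewerAttackers (R : AttFun A) (S S₁ S₂ : Set (Arg A)) : Prop :=
  (UndefAtt R S S₁ S₂).ncard ≤ (UndefAtt R S S₁ S₁).ncard

/-- Coalition profitability `S₁ ⊴ S₂`. -/
noncomputable def Profitable (R : AttFun A) (S S₁ S₂ : Set (Arg A)) : Prop :=
  S₁ ⊆ S₂ ∧ StateLeq R S S₁ S₂ ∧ FewerAttackers R S S₁ S₂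

/-- `Max(S₁)`: maximal profitable extensions of `S₁` within `S`. -/
noncomputable def MaxSet (R : AttFun A) (S S₁ : Set (Arg A)) : Set (Set (Arg A)) :=
  {Sx | Sx ⊆ S ∧ Profitable R S S₁ Sx ∧
    ∀ Sy, Sx ⊂ Sy → Sy ⊆ S → ¬ Profitable R S S₁ Sy}

open Classical in
/-- State rank: 2 for c-admissible, 0 for one-directionally attacked, 1 otherwise. -/
noncomputable def stateRank (R : AttFun A) (S S₁ : Set (Arg A)) : ℕ :=
  if CAdmissible R S S₁ then 2 else if OneDirAttacked R S S₁ then 0 else 1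

/-- Number of external undefeated attackers of `Sx`. -/
noncomputable def extAttCount (R : AttFun A) (S Sx : Set (Arg A)) : ℕ :=
  (UndefAtt R S Sx Sx).ncard

/-- The three comparison criteria: set size, state, external attackers. -/
inductive Crit | l | b | f

/-- `≤_β` for `β ∈ {l, b, f}`. -/
noncomputable def critLe (R : AttFun A) (S : Set (Arg A)) :
    Crit → Set (Arg A) → Set (Arg A) → Prop
  | .l, S₁, S₂ => S₁.ncard ≤ S₂.ncard
  | .b, S₁, S₂ => stateRank R S S₁ ≤ stateRank R S S₂
  | .f, S₁, S₂ => extAttCount R S S₂ ≤ extAttCount R S S₁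

/-- `<_β`. -/
noncomputable def critLt (R : AttFun A) (S : Set (Arg A))
    (c : Crit) (S₁ S₂ : Set (Arg A)) : Prop :=
  critLe R S c S₁ S₂ ∧ ¬ critLe R S c S₂ S₁

/-- Maximal profitability `S₁ ⊴_m S₂`. -/
noncomputable def ProfitableM (R : AttFun A) (S S₁ S₂ : Set (Arg A)) : Prop :=
  Profitable R S S₁ S₂ ∧ ∃ Sx ∈ MaxSet R S S₂, ∀ Sy ∈ MaxSet R S S₁,
    ∀ β : Crit, critLt R S β Sx Sy → ∃ γ : Crit, γ ≠ β ∧ critLt R S γ Sy Sx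

/-- The coalition formability semantics `W`. -/
noncomputable def Wsem (R : AttFun A) (S S₁ : Set (Arg A)) : Set (Set (Arg A)) :=
  {S₂ | S₂ ⊆ S ∧ (Profitable R S S₁ (S₁ ∪ S₂) ∨ Profitable R S S₂ (S₁ ∪ S₂))}

/-- The coalition formability semantics `M`. -/
noncomputable def Msem (R : AttFun A) (S S₁ : Set (Arg A)) : Set (Set (Arg A)) :=
  {S₂ | S₂ ⊆ S ∧ Profitable R S S₁ (S₁ ∪ S₂) ∧ Profitable R S S₂ (S₁ ∪ S₂)}

/-- The coalition formability semantics `WS`. -/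
noncomputable def WSsem (R : AttFun A) (S S₁ : Set (Arg A)) : Set (Set (Arg A)) :=
  {S₂ | S₂ ⊆ S ∧ (ProfitableM R S S₁ (S₁ ∪ S₂) ∨ ProfitableM R S S₂ (S₁ ∪ S₂))}

/-- The coalition formability semantics `S`. -/
noncomputable def Ssem (R : AttFun A) (S S₁ : Set (Arg A)) : Set (Set (Arg A)) :=
  {S₂ | S₂ ⊆ S ∧ ProfitableM R S S₁ (S₁ ∪ S₂) ∧ ProfitableM R S S₂ (S₁ ∪ S₂)}

/-- Weak continuity of `⊴` for `S₁`. -/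
noncomputable def WeaklyContinuous (R : AttFun A) (S S₁ : Set (Arg A)) : Prop :=
  ∃ Sz ∈ MaxSet R S S₁, ∀ Sw ⊆ Sz,
    CoalitionPermitted R S₁ (Sw \ S₁) → Profitable R S S₁ Sw

/-! Nielsen–Parsons argumentation frameworks. -/

/-- `A₁` NP-attacks `a` in the NP framework with attack relation `G`. -/
def NPattacks (G : Set (Set (Arg A) × Arg A)) (A₁ : Set (Arg A)) (a : Arg A) : Prop :=
  ∃ A' ⊆ A₁, (A', a) ∈ G

/-- `(Ax, a) ∈ G` is minimal. -/
def NPminimal (G : Set (Set (Arg A) × Arg A)) (Ax : Set (Arg A)) (a : Arg A) : Prop :=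
  (Ax, a) ∈ G ∧ ∀ A'', A'' ⊂ Ax → (A'', a) ∉ G

/-- NP-conflict-freeness. -/
def NPconflictFree (G : Set (Set (Arg A) × Arg A)) (A₁ : Set (Arg A)) : Prop :=
  ∀ a ∈ A₁, ¬ NPattacks G A₁ a

/-- `A₁` NP-defends `a` within `S`. -/
def NPdefends (G : Set (Set (Arg A) × Arg A)) (S A₁ : Set (Arg A)) (a : Arg A) : Prop :=
  ∀ Ax ⊆ S, NPminimal G Ax a → ∃ ax ∈ Ax, NPattacks G A₁ ax

/-- NP-admissibility. -/
def NPadmissible (G : Set (Set (Arg A) × Arg A)) (S A₁ : Set (Arg A)) : Prop :=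
  A₁ ⊆ S ∧ NPconflictFree G A₁ ∧ ∀ a ∈ A₁, NPdefends G S A₁ a

/-- NP-preferredness. -/
def NPpreferred (G : Set (Set (Arg A) × Arg A)) (S A₁ : Set (Arg A)) : Prop :=
  NPadmissible G S A₁ ∧ ¬ ∃ A₂, A₁ ⊂ A₂ ∧ A₂ ⊆ S ∧ NPadmissible G S A₂

/-- `(S, G)` is a Nielsen–Parsons argumentation framework. -/
def IsNPFramework (S : Set (Arg A)) (G : Set (Set (Arg A) × Arg A)) : Prop :=
  S.Finite ∧ ∀ p ∈ G, p.1.Nonempty ∧ p.1 ⊆ S ∧ p.2 ∈ S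

end CoalitionArg

/-! Every attack being a defeat, a conflict-eliminable set attacks none of its own members.
Hence all its maximal attack strengths vanish, so `α(S₁) = S₁`, and the view of `S₁` only
deletes attacks on members of `S₁`: attacks on outside arguments survive with their strength. -/

namespace CoalitionArg

variable {A : Type*} {R : AttFun A} {S₁ T : Set (Arg A)} {s : Arg A}

theorem vmax_eq_zero_of_not_attacks (h : ¬ Attacks R S₁ s) : Vmax R S₁ s = 0 := by
  have hempty : {n | ∃ S₂ ⊆ S₁, R S₂ s = some n} = ∅ :=
    Set.eq_empty_of_forall_notMem fun n ⟨S₂, hS₂, hn⟩ => h ⟨S₂, hS₂, by simp [RDef, hn]⟩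
  rw [Vmax, hempty, csSup_empty, bot_eq_zero]

theorem alpha_eq_self_of_forall_not_attacks (hfree : ∀ s ∈ S₁, ¬ Attacks R S₁ s) :
    alpha R S₁ = S₁ := by
  have hid : Set.EqOn (fun s => (s.1, s.2 - Vmax R S₁ s)) id S₁ := fun s hs => by
    simp [vmax_eq_zero_of_not_attacks (hfree s hs)]
  rw [alpha, hid.image_eq, Set.image_id]

theorem viewAtt_of_notMem (hs : s ∉ S₁) : viewAtt R S₁ T s = R T s :=
  if_neg fun hdel => hs hdel.1

theorem viewAtt_of_mem_of_subset (hs : s ∈ S₁) (hT : T ⊆ S₁) : viewAtt R S₁ T s = none := by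
  unfold viewAtt
  split_ifs with hdel
  · rfl
  · exact Option.not_isSome_iff_eq_none.mp fun hdef => hdel ⟨hs, hT, hdef⟩

theorem ConfElim.forall_not_attacks (hce : ConfElim R S₁)
    (hdefeat : ∀ s ∈ S₁, Attacks R S₁ s → Defeats R S₁ s) : ∀ s ∈ S₁, ¬ Attacks R S₁ s :=
  fun s hs hatt => hce s hs (hdefeat s hs hatt)

section AttackFree

variable (hfree : ∀ s ∈ S₁, ¬ Attacks R S₁ s)
include hfree

theorem CAttacks.attacks_of_forall_not_attacks (hca : CAttacks R S₁ s) : Attacks R S₁ s := by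
  obtain ⟨-, S₂, hS₂, hdef⟩ := hca
  rw [alpha_eq_self_of_forall_not_attacks hfree] at hS₂
  by_cases hs : s ∈ S₁
  · simp [RDef, viewAtt_of_mem_of_subset hs hS₂] at hdef
  · exact ⟨S₂, hS₂, by rwa [RDef, ← viewAtt_of_notMem (R := R) (T := S₂) hs]⟩

theorem CAttacks.cdefeats_of_defeats (hca : CAttacks R S₁ s) (hd : Defeats R S₁ s) :
    CDefeats R S₁ s := by
  obtain ⟨hatt, S₃, hS₃, n, hn, -, hle⟩ := hd
  have hs : s ∉ S₁ := fun hs => hfree s hs hatt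
  refine ⟨hca, S₃, ?_, n, ?_, hle⟩
  · rwa [alpha_eq_self_of_forall_not_attacks hfree]
  · rwa [viewAtt_of_notMem hs]

end AttackFree

end CoalitionArg

open CoalitionArg in
theorem restricted_cattack_attack_cdefeat_general {A : Type*}
    (R : AttFun A) (S : Set (Arg A))
    (hdefeat : ∀ S₁ ⊆ S, ∀ s ∈ S, Attacks R S₁ s → Defeats R S₁ s) :
    (∀ S₁ ⊆ S, ∀ s ∈ S, CAttacks R S₁ s → Attacks R S₁ s) ∧
    (∀ S₁ ⊆ S, ∀ s ∈ S, CAttacks R S₁ s → CDefeats R S₁ s) := by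
  have hfree : ∀ S₁ ⊆ S, ∀ s, CAttacks R S₁ s → ∀ x ∈ S₁, ¬ Attacks R S₁ x :=
    fun S₁ hS₁ _ hca => hca.1.forall_not_attacks fun x hx => hdefeat S₁ hS₁ x (hS₁ hx)
  have hatt : ∀ S₁ ⊆ S, ∀ s ∈ S, CAttacks R S₁ s → Attacks R S₁ s :=
    fun S₁ hS₁ s _ hca => hca.attacks_of_forall_not_attacks (hfree S₁ hS₁ s hca)
  refine ⟨hatt, fun S₁ hS₁ s hs hca => ?_⟩
  exact hca.cdefeats_of_defeats (hfree S₁ hS₁ s hca) (hdefeat S₁ hS₁ s hs (hatt S₁ hS₁ s hs hca))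

open CoalitionArg in
/-- In the restricted framework, every c-attack is an attack and every c-attack
is a c-defeat. -/
theorem restricted_cattack_attack_cdefeat {A : Type*}
    (R : AttFun A) (S : Set (Arg A))
    (hcoh : Coherent S) (hR : IsAttackStrengthRestr R)
    (hdefeat : ∀ S₁ ⊆ S, ∀ s ∈ S, Attacks R S₁ s → Defeats R S₁ s) :
    (∀ S₁ ⊆ S, ∀ s ∈ S, CAttacks R S₁ s → Attacks R S₁ s) ∧
    (∀ S₁ ⊆ S, ∀ s ∈ S, CAttacks R S₁ s → CDefeats R S₁ s) :=
  restricted_cattack_attack_cdefeat_general R S hdefeat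
end

section
/- Let (S,R) be an argumentation framework, let S₁ ⊆ S be such that α(S₁) is defined, and let S_x ⊆ S be a c-admissible set with S₁ ⊂ S_x. Then: (1) α is defined for S₂ = S_x ∖ S₁; (2) coalition is permitted between S₁ and S₂; (3) S₁ ⊴ S_x. -/
/-!
Defeat is monotone in the attacking set: inside a finite set the strongest attack on an argument
only grows with the set. Hence every subset of the conflict-eliminable set `Sx` is
conflict-eliminable. Moreover, a single outside attacker `{s}` of `S₁ ⊆ Sx` lies in the view of
`Sx`, so c-admissibility of `Sx` forces `Sx` to c-defeat it: `Sx` leaves no undefeated attacker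
of `S₁`.
-/

namespace CoalitionArg

variable {A : Type*} {R : AttFun A}

theorem Attacks.mono {T U : Set (Arg A)} {s : Arg A} (hTU : T ⊆ U) (h : Attacks R T s) :
    Attacks R U s :=
  let ⟨S₂, hS₂, hdef⟩ := h
  ⟨S₂, hS₂.trans hTU, hdef⟩

theorem exists_strongest_attack {U S₀ : Set (Arg A)} {s : Arg A} (hU : U.Finite)
    (hS₀ : S₀ ⊆ U) (hdef : RDef R S₀ s) :
    ∃ S' ⊆ U, ∃ m, R S' s = some m ∧ ∀ Sy ⊆ U, ∀ k, R Sy s = some k → k ≤ m := by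
  obtain ⟨S', ⟨hS'U, hdef'⟩, hmax⟩ :=
    Set.exists_max_image {T | T ⊆ U ∧ RDef R T s} (fun T => (R T s).getD 0)
      (hU.finite_subsets.subset fun _ hT => hT.1) ⟨S₀, hS₀, hdef⟩
  obtain ⟨m, hm⟩ := Option.isSome_iff_exists.mp hdef'
  refine ⟨S', hS'U, m, hm, fun Sy hSy k hk => ?_⟩
  simpa [hk, hm] using hmax Sy ⟨hSy, by simp [RDef, hk]⟩

theorem Defeats.mono {T U : Set (Arg A)} {s : Arg A} (hTU : T ⊆ U) (hU : U.Finite)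
    (h : Defeats R T s) : Defeats R U s := by
  obtain ⟨hatt, St, hSt, n, hn, -, hcap⟩ := h
  obtain ⟨S', hS'U, m, hm, hmax⟩ :=
    exists_strongest_attack hU (hSt.trans hTU) (show RDef R St s by simp [RDef, hn])
  exact ⟨hatt.mono hTU, S', hS'U, m, hm, hmax, hcap.trans (hmax St (hSt.trans hTU) n hn)⟩

theorem ConfElim.subset {T U : Set (Arg A)} (hU : U.Finite) (h : ConfElim R U) (hTU : T ⊆ U) :
    ConfElim R T :=
  fun s hs hdef => h s (hTU hs) (hdef.mono hTU hU)

theorem attacks_singleton_iff (hR : ∀ s, R ∅ s = none) {a s : Arg A} :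
    Attacks R {a} s ↔ RDef R {a} s := by
  refine ⟨fun ⟨T, hT, hdef⟩ => ?_, fun h => ⟨{a}, subset_rfl, h⟩⟩
  rcases Set.subset_singleton_iff_eq.mp hT with rfl | rfl
  · simp [RDef, hR] at hdef
  · exact hdef

theorem undefAtt_eq_empty_of_cAdmissible (hR : ∀ s, R ∅ s = none) {S S₁ Sx : Set (Arg A)}
    (hadm : CAdmissible R S Sx) (hS₁ : S₁ ⊆ Sx) : UndefAtt R S S₁ Sx = ∅ := by
  refine Set.eq_empty_of_forall_notMem ?_
  rintro a ⟨⟨haS, s₁, hs₁, hatt⟩, hncd, haSx⟩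
  have hdef : RDef R {a} s₁ := (attacks_singleton_iff hR).mp hatt
  have hview : {a} ⊆ viewArgs R S Sx :=
    Set.singleton_subset_iff.mpr (Or.inl ⟨haS, haSx⟩)
  obtain ⟨_, rfl, hcd⟩ := hadm.2 {a} hview s₁ (hS₁ hs₁) hatt {a} subset_rfl hdef
  exact hncd hcd

end CoalitionArg

open CoalitionArg in
theorem profitable_of_cadmissible_superset_general {A : Type*} (F : AF A)
    (S₁ Sx : Set (Arg A)) (hce : ConfElim F.att S₁)
    (hSx : Sx ⊆ F.args) (hadm : CAdmissible F.att F.args Sx) (hss : S₁ ⊂ Sx) :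
    ConfElim F.att (Sx \ S₁) ∧
    CoalitionPermitted F.att S₁ (Sx \ S₁) ∧
    Profitable F.att F.args S₁ Sx := by
  have hSxfin : Sx.Finite := F.coherent.1.subset hSx
  have hfewer : FewerAttackers F.att F.args S₁ Sx := by
    rw [FewerAttackers, undefAtt_eq_empty_of_cAdmissible F.isAtt.empty_undef hadm hss.subset]
    simp
  refine ⟨hadm.1.subset hSxfin Set.sdiff_subset, ⟨Set.inter_sdiff_self _ _, ?_⟩,
    hss.subset, ⟨hce, hadm.1, Or.inl hadm⟩, hfewer⟩
  rw [Set.union_sdiff_cancel hss.subset]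
  exact hadm.1

open CoalitionArg in
/-- A conflict-eliminable set profits from any c-admissible strict superset. -/
theorem profitable_of_cadmissible_superset {A : Type*} (F : AF A)
    (S₁ Sx : Set (Arg A)) (hS₁ : S₁ ⊆ F.args) (hce : ConfElim F.att S₁)
    (hSx : Sx ⊆ F.args) (hadm : CAdmissible F.att F.args Sx) (hss : S₁ ⊂ Sx) :
    ConfElim F.att (Sx \ S₁) ∧
    CoalitionPermitted F.att S₁ (Sx \ S₁) ∧
    Profitable F.att F.args S₁ Sx :=
  profitable_of_cadmissible_superset_general F S₁ Sx hce hSx hadm hss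
end
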